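/- arXiv:2512.24795 — 6 statements merged into one kernel-verified Lean document; each statement's English description precedes it below -/
import Mathlib

section
/- Let K be a field of characteristic zero, g a Lie algebra over K, V a Lie module over g, and b a g-invariant k-linear map on V, i.e. Σ_{a=1}^k b(x₁, …, ⁅v, x_a⁆, …, x_k) = 0 for all v ∈ g and x₁, …, x_k ∈ V. For m ≥ 1 and families v^{(1)}, …, v^{(k)} : {1,…,m} → V define F(v^{(1)}, …, v^{(k)}) := (1/m!) Σ_{σ₁,…,σ_k ∈ S_m} sgn(σ₁)⋯sgn(σ_k) Π_{r=1}^m b(v^{(1)}(σ₁⁻¹(r)), …, v^{(k)}(σ_k⁻¹(r))). Then F is g-invariant in the sense that for every v ∈ g, Σ_{a=1}^k Σ_{i=1}^m F(v^{(1)}, …, [v^{(a)} with its i-th entry replaced by ⁅v, v^{(a)}(i)⁆], …, v^{(k)}) = 0. -/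
/-- The value of the induced `k`-linear map `b_{Λ^m V}` on decomposable `m`-vectors
`v^{(a)}(1) ∧ … ∧ v^{(a)}(m)`, built from a `k`-linear map `b` on `V`. -/
noncomputable def inducedExteriorForm
    {K : Type*} [Field K] {V : Type*} [AddCommGroup V] [Module K V]
    {k : ℕ} (b : MultilinearMap K (fun _ : Fin k => V) K) (m : ℕ)
    (v : Fin k → Fin m → V) : K :=
  (Nat.factorial m : K)⁻¹ *
    ∑ σ : Fin k → Equiv.Perm (Fin m),
      (∏ a, ((Equiv.Perm.sign (σ a) : ℤ) : K)) *
        ∏ r : Fin m, b (fun a => v a ((σ a)⁻¹ r))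

/-- If `b` is a `g`-invariant `k`-linear map on a Lie module `V` over a field of
characteristic zero, then its extension `b_{Λ^m V}` to `m`-vectors is `g`-invariant
with respect to the induced Lie module structure of `Λ^m V`. -/
theorem inducedExteriorForm_invariant
    {K : Type*} [Field K] [CharZero K]
    {L : Type*} [LieRing L] [LieAlgebra K L]
    {V : Type*} [AddCommGroup V] [Module K V] [LieRingModule L V] [LieModule K L V]
    {k : ℕ} (b : MultilinearMap K (fun _ : Fin k => V) K)
    (hb : ∀ (w : L) (x : Fin k → V), ∑ a, b (Function.update x a ⁅w, x a⁆) = 0)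
    (m : ℕ) (hm : 1 ≤ m) (v : Fin k → Fin m → V) (w : L) :
    ∑ a : Fin k, ∑ i : Fin m,
      inducedExteriorForm b m
        (Function.update v a (Function.update (v a) i ⁅w, v a i⁆)) = 0 := by
  classical
  have key : ∀ σ : Fin k → Equiv.Perm (Fin m),
      (∑ a : Fin k, ∑ i : Fin m, ∏ r : Fin m,
        b (fun a' => Function.update v a (Function.update (v a) i ⁅w, v a i⁆) a'
          ((σ a')⁻¹ r))) = 0 := by
    intro σ
    set f : Fin m → Fin k → V := fun r a' => v a' ((σ a')⁻¹ r) with hf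
    have step1 : ∀ (a : Fin k) (i : Fin m),
        (∏ r : Fin m, b (fun a' =>
          Function.update v a (Function.update (v a) i ⁅w, v a i⁆) a' ((σ a')⁻¹ r)))
        = b (Function.update (f (σ a i)) a ⁅w, (f (σ a i)) a⁆) *
            ∏ r ∈ Finset.univ \ {σ a i}, b (f r) := by
      intro a i
      rw [Finset.prod_eq_mul_prod_sdiff_singleton_of_mem (Finset.mem_univ (σ a i))
        (fun r => b (fun a' =>
          Function.update v a (Function.update (v a) i ⁅w, v a i⁆) a' ((σ a')⁻¹ r)))]
      congr 1
      · congr 1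
        funext a'
        rcases eq_or_ne a' a with rfl | h
        · simp [hf]
        · simp [Function.update_of_ne h, hf]
      · refine Finset.prod_congr rfl fun r hr => ?_
        simp only [Finset.mem_sdiff, Finset.mem_singleton, Finset.mem_univ, true_and] at hr
        congr 1
        funext a'
        rcases eq_or_ne a' a with rfl | h
        · rw [Function.update_self, Function.update_of_ne, hf]
          intro hi
          exact hr (by rw [← hi]; simp)
        · rw [Function.update_of_ne h]
    calc (∑ a : Fin k, ∑ i : Fin m, ∏ r : Fin m, b (fun a' =>
            Function.update v a (Function.update (v a) i ⁅w, v a i⁆) a' ((σ a')⁻¹ r)))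
        = ∑ a : Fin k, ∑ r₀ : Fin m,
            b (Function.update (f r₀) a ⁅w, (f r₀) a⁆) *
              ∏ r ∈ Finset.univ \ {r₀}, b (f r) := by
          refine Finset.sum_congr rfl fun a _ => ?_
          rw [Finset.sum_congr rfl fun i _ => step1 a i]
          exact Fintype.sum_equiv (σ a)
            (fun i => b (Function.update (f (σ a i)) a ⁅w, (f (σ a i)) a⁆) *
              ∏ r ∈ Finset.univ \ {σ a i}, b (f r))
            (fun r₀ => b (Function.update (f r₀) a ⁅w, (f r₀) a⁆) *
              ∏ r ∈ Finset.univ \ {r₀}, b (f r))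
            (fun i => rfl)
      _ = ∑ r₀ : Fin m, (∑ a : Fin k, b (Function.update (f r₀) a ⁅w, (f r₀) a⁆)) *
            ∏ r ∈ Finset.univ \ {r₀}, b (f r) := by
          rw [Finset.sum_comm]
          exact Finset.sum_congr rfl fun r₀ _ => (Finset.sum_mul _ _ _).symm
      _ = 0 := by
          refine Finset.sum_eq_zero fun r₀ _ => ?_
          rw [hb w (f r₀), zero_mul]
  simp only [inducedExteriorForm, ← Finset.mul_sum]
  have hswap : (∑ a : Fin k, ∑ i : Fin m, ∑ σ : Fin k → Equiv.Perm (Fin m),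
        (∏ a', ((Equiv.Perm.sign (σ a') : ℤ) : K)) *
          ∏ r : Fin m, b (fun a' => Function.update v a
            (Function.update (v a) i ⁅w, v a i⁆) a' ((σ a')⁻¹ r)))
      = ∑ σ : Fin k → Equiv.Perm (Fin m), ∑ a : Fin k, ∑ i : Fin m,
        (∏ a', ((Equiv.Perm.sign (σ a') : ℤ) : K)) *
          ∏ r : Fin m, b (fun a' => Function.update v a
            (Function.update (v a) i ⁅w, v a i⁆) a' ((σ a')⁻¹ r)) := by
    calc (∑ a : Fin k, ∑ i : Fin m, ∑ σ : Fin k → Equiv.Perm (Fin m),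
            (∏ a', ((Equiv.Perm.sign (σ a') : ℤ) : K)) *
              ∏ r : Fin m, b (fun a' => Function.update v a
                (Function.update (v a) i ⁅w, v a i⁆) a' ((σ a')⁻¹ r)))
        = ∑ a : Fin k, ∑ σ : Fin k → Equiv.Perm (Fin m), ∑ i : Fin m,
            (∏ a', ((Equiv.Perm.sign (σ a') : ℤ) : K)) *
              ∏ r : Fin m, b (fun a' => Function.update v a
                (Function.update (v a) i ⁅w, v a i⁆) a' ((σ a')⁻¹ r)) :=
          Finset.sum_congr rfl fun a _ => Finset.sum_comm
      _ = ∑ σ : Fin k → Equiv.Perm (Fin m), ∑ a : Fin k, ∑ i : Fin m,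
            (∏ a', ((Equiv.Perm.sign (σ a') : ℤ) : K)) *
              ∏ r : Fin m, b (fun a' => Function.update v a
                (Function.update (v a) i ⁅w, v a i⁆) a' ((σ a')⁻¹ r)) :=
          Finset.sum_comm
  rw [hswap]
  rw [Finset.sum_eq_zero fun σ _ => ?_, mul_zero]
  simp only [← Finset.mul_sum]
  rw [key σ, mul_zero]
end

section
/- Let g be a Lie algebra over a field K and let b : g × g → K be a symmetric g-invariant bilinear form, i.e. b(⁅v, x⁆, y) + b(x, ⁅v, y⁆) = 0 for all v, x, y ∈ g. Let h ∈ g, let v₁, …, v_m, w₁, …, w_m ∈ g, and let a₁, …, a_m, c₁, …, c_m ∈ K satisfy ⁅h, v_i⁆ = a_i v_i and ⁅h, w_j⁆ = c_j w_j for all i, j. If a₁ + ⋯ + a_m + c₁ + ⋯ + c_m ≠ 0, then the Gram determinant det(b(v_i, w_j))_{i,j=1}^m vanishes. -/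
/-- Orthogonality of homogeneous multivectors: if `b` is a symmetric `g`-invariant
bilinear form on a Lie algebra `g`, and `v₁,…,v_m`, `w₁,…,w_m` are eigenvectors of
`ad_h` with eigenvalues `a_i`, `c_j` whose total sum is nonzero, then the Gram
determinant `det(b(v_i, w_j))` vanishes. -/
theorem gram_det_vanishes_of_nonzero_total_weight
    {K : Type*} [Field K]
    {L : Type*} [LieRing L] [LieAlgebra K L]
    (b : L →ₗ[K] L →ₗ[K] K)
    (hsym : ∀ x y : L, b x y = b y x)
    (hinv : ∀ v x y : L, b ⁅v, x⁆ y + b x ⁅v, y⁆ = 0)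
    {m : ℕ} (h : L) (v w : Fin m → L) (a c : Fin m → K)
    (hv : ∀ i, ⁅h, v i⁆ = a i • v i)
    (hw : ∀ j, ⁅h, w j⁆ = c j • w j)
    (hne : (∑ i, a i) + (∑ j, c j) ≠ 0) :
    Matrix.det (Matrix.of fun i j => b (v i) (w j)) = 0 := by
  have key : ∀ i j, (a i + c j) * b (v i) (w j) = 0 := by
    intro i j
    have := hinv h (v i) (w j)
    rw [hv i, hw j] at this
    simp only [map_smul, LinearMap.smul_apply, smul_eq_mul] at this
    linear_combination this
  rw [Matrix.det_apply]
  refine Finset.sum_eq_zero fun σ _ => ?_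
  suffices hz : (∏ i, (Matrix.of fun i j => b (v i) (w j)) (σ i) i) = 0 by
    rw [hz, smul_zero]
  by_contra hnz
  replace hnz := Finset.prod_ne_zero_iff.mp hnz
  apply hne
  have hzero : ∀ i, a (σ i) + c i = 0 := by
    intro i
    by_contra hne'
    have hk := key (σ i) i
    exact hnz i (Finset.mem_univ i)
      (by simpa using (mul_eq_zero.mp hk).resolve_left hne')
  calc (∑ i, a i) + (∑ j, c j) = ∑ i, (a (σ i) + c i) := by
        rw [Finset.sum_add_distrib, Equiv.sum_comp σ a]
      _ = 0 := by simp [hzero]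
end

section
/- Let g be a Lie algebra over a field K and let r ∈ g ⊗ g be antisymmetric. Then for every x ∈ g the identity Alt((δ_r ⊗ id)(δ_r(x))) + ⁅x, ⟦r, r⟧⁆ = 0 holds in g ⊗ g ⊗ g, where δ_r(x) = ⁅x, r⁆, ⟦r, r⟧ = [r₁₂, r₁₃] + [r₁₂, r₂₃] + [r₁₃, r₂₃], and Alt is the sum of the three cyclic rotations of the tensor factors. -/
open TensorProduct

attribute [local instance 100] LieRing.ofAssociativeRing

/-- The Lie bracket of `g`, as a linear map `g ⊗ g → g`. -/
noncomputable def lieBracketTensor (K : Type*) [Field K] (L : Type*) [LieRing L]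
    [LieAlgebra K L] : L ⊗[K] L →ₗ[K] L :=
  TensorProduct.lift (LieAlgebra.ad K L).toLinearMap

/-- The linear map `(g⊗g) ⊗ (g⊗g) → g⊗g⊗g` determined on pure tensors by
`(a⊗b)⊗(c⊗d) ↦ ⁅a,c⁆⊗b⊗d + a⊗⁅b,c⁆⊗d + a⊗c⊗⁅b,d⁆`; applied to `r ⊗ r` it yields
`⟦r,r⟧ = [r₁₂,r₁₃] + [r₁₂,r₂₃] + [r₁₃,r₂₃]`. -/
noncomputable def ybMap (K : Type*) [Field K] (L : Type*) [LieRing L] [LieAlgebra K L] :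
    (L ⊗[K] L) ⊗[K] (L ⊗[K] L) →ₗ[K] L ⊗[K] (L ⊗[K] L) :=
  (TensorProduct.map (lieBracketTensor K L) (LinearMap.id : L ⊗[K] L →ₗ[K] L ⊗[K] L)).comp
      (TensorProduct.tensorTensorTensorComm K L L L L).toLinearMap
  + (TensorProduct.map (LinearMap.id : L →ₗ[K] L)
        ((TensorProduct.map (lieBracketTensor K L) (LinearMap.id : L →ₗ[K] L)).comp
          (TensorProduct.assoc K L L L).symm.toLinearMap)).comp
      (TensorProduct.assoc K L L (L ⊗[K] L)).toLinearMap
  + (TensorProduct.map (LinearMap.id : L →ₗ[K] L)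
        (TensorProduct.map (LinearMap.id : L →ₗ[K] L) (lieBracketTensor K L))).comp
      ((TensorProduct.assoc K L L (L ⊗[K] L)).toLinearMap.comp
        (TensorProduct.tensorTensorTensorComm K L L L L).toLinearMap)

/-- For `r ∈ g ⊗ g`, the linear map `δ_r : g → g ⊗ g`, `δ_r(x) = ⁅x, r⁆`. -/
noncomputable def deltaR {K : Type*} [Field K] {L : Type*} [LieRing L] [LieAlgebra K L]
    (r : L ⊗[K] L) : L →ₗ[K] L ⊗[K] L where
  toFun x := ⁅x, r⁆
  map_add' x y := add_lie x y r
  map_smul' t x := smul_lie t x r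

/-- The cyclic rotation `a⊗b⊗c ↦ b⊗c⊗a` of `g⊗g⊗g`. -/
noncomputable def cycMap (K : Type*) [Field K] (L : Type*) [LieRing L] [LieAlgebra K L] :
    L ⊗[K] (L ⊗[K] L) →ₗ[K] L ⊗[K] (L ⊗[K] L) :=
  (TensorProduct.assoc K L L L).toLinearMap.comp
    (TensorProduct.comm K L (L ⊗[K] L)).toLinearMap

/-- `Alt : g⊗g⊗g → g⊗g⊗g`, `a⊗b⊗c ↦ a⊗b⊗c + c⊗a⊗b + b⊗c⊗a`, the sum of the three
cyclic rotations of the tensor factors. -/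
noncomputable def altMap (K : Type*) [Field K] (L : Type*) [LieRing L] [LieAlgebra K L] :
    L ⊗[K] (L ⊗[K] L) →ₗ[K] L ⊗[K] (L ⊗[K] L) :=
  LinearMap.id + cycMap K L + (cycMap K L).comp (cycMap K L)

/-!
Since `δ_r(x) = ⁅x, r⁆` and `⟦·,·⟧` is `g`-equivariant, `⁅x, ⟦r,r⟧⁆ = ⟦s,r⟧ + ⟦r,s⟧` with
`s = ⁅x, r⁆`, which is antisymmetric together with `r`. So it suffices to show
`Alt((δ_r ⊗ id) s) + ⟦s,r⟧ + ⟦r,s⟧ = 0` for all antisymmetric `r, s`, an identity without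
Jacobi: the identity term of `Alt` cancels the first two summands of `⟦r,s⟧`, and the
antisymmetry of `r` and `s` makes the four remaining summands of `⟦s,r⟧ + ⟦r,s⟧` the cyclic
rotations of those two, which the other two terms of `Alt` cancel.
-/

section

variable {R : Type*} [CommRing R] {L : Type*} [LieRing L] [LieAlgebra R L]
  {M : Type*} [AddCommGroup M] [Module R M] [LieRingModule L M] [LieModule R L M]
  {N : Type*} [AddCommGroup N] [Module R N] [LieRingModule L N] [LieModule R L N]

lemma TensorProduct.comm_lie (x : L) (t : M ⊗[R] N) :
    TensorProduct.comm R M N ⁅x, t⁆ = ⁅x, TensorProduct.comm R M N t⁆ := by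
  induction t using TensorProduct.induction_on with
  | zero => simp
  | tmul m n => simp [TensorProduct.LieModule.lie_tmul_right, add_comm]
  | add t t' ht ht' => simp only [lie_add, map_add, ht, ht']

end

section

variable {K : Type*} [Field K] {L : Type*} [LieRing L] [LieAlgebra K L]

lemma deltaR_apply (r : L ⊗[K] L) (x : L) : deltaR r x = ⁅x, r⁆ := rfl

lemma lieBracketTensor_tmul (a b : L) : lieBracketTensor K L (a ⊗ₜ b) = ⁅a, b⁆ := by
  simp [lieBracketTensor]

lemma cycMap_tmul (a b c : L) : cycMap K L (a ⊗ₜ (b ⊗ₜ c)) = b ⊗ₜ (c ⊗ₜ a) := by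
  simp [cycMap]

variable (K L)

-- The three summands of `ybMap`, named after the terms `[r₁₂,r₁₃]`, `[r₁₂,r₂₃]`, `[r₁₃,r₂₃]`.
noncomputable def ybMap₁₂₁₃ : (L ⊗[K] L) ⊗[K] (L ⊗[K] L) →ₗ[K] L ⊗[K] (L ⊗[K] L) :=
  (TensorProduct.map (lieBracketTensor K L) (LinearMap.id : L ⊗[K] L →ₗ[K] L ⊗[K] L)).comp
      (TensorProduct.tensorTensorTensorComm K L L L L).toLinearMap

noncomputable def ybMap₁₂₂₃ : (L ⊗[K] L) ⊗[K] (L ⊗[K] L) →ₗ[K] L ⊗[K] (L ⊗[K] L) :=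
  (TensorProduct.map (LinearMap.id : L →ₗ[K] L)
        ((TensorProduct.map (lieBracketTensor K L) (LinearMap.id : L →ₗ[K] L)).comp
          (TensorProduct.assoc K L L L).symm.toLinearMap)).comp
      (TensorProduct.assoc K L L (L ⊗[K] L)).toLinearMap

noncomputable def ybMap₁₃₂₃ : (L ⊗[K] L) ⊗[K] (L ⊗[K] L) →ₗ[K] L ⊗[K] (L ⊗[K] L) :=
  (TensorProduct.map (LinearMap.id : L →ₗ[K] L)
        (TensorProduct.map (LinearMap.id : L →ₗ[K] L) (lieBracketTensor K L))).comp
      ((TensorProduct.assoc K L L (L ⊗[K] L)).toLinearMap.comp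
        (TensorProduct.tensorTensorTensorComm K L L L L).toLinearMap)

lemma ybMap_eq_add : ybMap K L = ybMap₁₂₁₃ K L + ybMap₁₂₂₃ K L + ybMap₁₃₂₃ K L := rfl

variable {K L}

@[simp]
lemma ybMap₁₂₁₃_tmul (a b c d : L) :
    ybMap₁₂₁₃ K L ((a ⊗ₜ b) ⊗ₜ (c ⊗ₜ d)) = ⁅a, c⁆ ⊗ₜ (b ⊗ₜ d) := by
  simp [ybMap₁₂₁₃, lieBracketTensor_tmul]

@[simp]
lemma ybMap₁₂₂₃_tmul (a b c d : L) :
    ybMap₁₂₂₃ K L ((a ⊗ₜ b) ⊗ₜ (c ⊗ₜ d)) = a ⊗ₜ (⁅b, c⁆ ⊗ₜ d) := by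
  simp [ybMap₁₂₂₃, lieBracketTensor_tmul]

@[simp]
lemma ybMap₁₃₂₃_tmul (a b c d : L) :
    ybMap₁₃₂₃ K L ((a ⊗ₜ b) ⊗ₜ (c ⊗ₜ d)) = a ⊗ₜ (c ⊗ₜ ⁅b, d⁆) := by
  simp [ybMap₁₃₂₃, lieBracketTensor_tmul]

lemma lie_ybMap (x : L) (w : (L ⊗[K] L) ⊗[K] (L ⊗[K] L)) :
    ⁅x, ybMap K L w⁆ = ybMap K L ⁅x, w⁆ := by
  suffices h : (LieModule.toEnd K L _ x) ∘ₗ ybMap K L = ybMap K L ∘ₗ LieModule.toEnd K L _ x from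
    LinearMap.congr_fun h w
  refine TensorProduct.ext_fourfold' fun a b c d => ?_
  simp only [ybMap_eq_add, LinearMap.comp_apply, LinearMap.add_apply, LieModule.toEnd_apply_apply,
    TensorProduct.LieModule.lie_tmul_right, leibniz_lie x, add_tmul, tmul_add, map_add,
    ybMap₁₂₁₃_tmul, ybMap₁₂₂₃_tmul, ybMap₁₃₂₃_tmul]
  abel

lemma comm_deltaR_of_comm_eq_neg {r : L ⊗[K] L} (hr : TensorProduct.comm K L L r = -r) (x : L) :
    TensorProduct.comm K L L (deltaR r x) = -deltaR r x := by
  rw [deltaR_apply, comm_lie, hr, lie_neg]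

lemma assoc_map_deltaR (r s : L ⊗[K] L) :
    TensorProduct.assoc K L L L (TensorProduct.map (deltaR r) LinearMap.id s)
      = -(ybMap₁₂₁₃ K L + ybMap₁₂₂₃ K L) (r ⊗ₜ s) := by
  induction s using TensorProduct.induction_on with
  | zero => simp
  | add s s' hs hs' => simp only [map_add, tmul_add, hs, hs', neg_add]
  | tmul c d =>
    induction r using TensorProduct.induction_on with
    | zero => simp [deltaR_apply]
    | add r r' hr hr' =>
      simp only [deltaR_apply, TensorProduct.map_tmul, LinearMap.id_apply] at hr hr' ⊢
      simp only [lie_add, add_tmul, map_add, hr, hr', neg_add]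
    | tmul a b =>
      simp only [deltaR_apply, map_tmul, LieModule.lie_tmul_right, ← lie_skew c a, ← lie_skew c b,
        neg_tmul, tmul_neg, LinearMap.id_coe, id_eq, add_tmul, map_add, map_neg, assoc_tmul,
        LinearMap.add_apply, ybMap₁₂₁₃_tmul, ybMap₁₂₂₃_tmul]
      abel

variable (K L)

lemma ybMap₁₃₂₃_eq :
    ybMap₁₃₂₃ K L = cycMap K L ∘ₗ ybMap₁₂₁₃ K L ∘ₗ
      TensorProduct.map (TensorProduct.comm K L L).toLinearMap
        (TensorProduct.comm K L L).toLinearMap :=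
  TensorProduct.ext_fourfold' fun a b c d => by
    simp [cycMap_tmul]

lemma ybMap₁₂₁₃_comp_comm :
    ybMap₁₂₁₃ K L ∘ₗ (TensorProduct.comm K (L ⊗[K] L) (L ⊗[K] L)).toLinearMap
      = -(cycMap K L ∘ₗ ybMap₁₂₂₃ K L ∘ₗ
          TensorProduct.map (TensorProduct.comm K L L).toLinearMap LinearMap.id) :=
  TensorProduct.ext_fourfold' fun a b c d => by
    simp [cycMap_tmul, ← lie_skew c a, -lie_skew, neg_tmul]

lemma ybMap₁₂₂₃_comp_comm :
    ybMap₁₂₂₃ K L ∘ₗ (TensorProduct.comm K (L ⊗[K] L) (L ⊗[K] L)).toLinearMap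
      = -(cycMap K L ∘ₗ cycMap K L ∘ₗ ybMap₁₂₁₃ K L ∘ₗ
          TensorProduct.map LinearMap.id (TensorProduct.comm K L L).toLinearMap) :=
  TensorProduct.ext_fourfold' fun a b c d => by
    simp [cycMap_tmul, ← lie_skew d a, -lie_skew, neg_tmul, tmul_neg]

lemma ybMap₁₃₂₃_comp_comm :
    ybMap₁₃₂₃ K L ∘ₗ (TensorProduct.comm K (L ⊗[K] L) (L ⊗[K] L)).toLinearMap
      = -(cycMap K L ∘ₗ cycMap K L ∘ₗ ybMap₁₂₂₃ K L ∘ₗ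
          TensorProduct.map LinearMap.id (TensorProduct.comm K L L).toLinearMap) :=
  TensorProduct.ext_fourfold' fun a b c d => by
    simp [cycMap_tmul, ← lie_skew d b, -lie_skew, tmul_neg]

variable {K L}

lemma altMap_assoc_map_deltaR_add_ybMap_add_ybMap {r s : L ⊗[K] L}
    (hr : TensorProduct.comm K L L r = -r) (hs : TensorProduct.comm K L L s = -s) :
    altMap K L (TensorProduct.assoc K L L L (TensorProduct.map (deltaR r) LinearMap.id s))
      + ybMap K L (s ⊗ₜ r) + ybMap K L (r ⊗ₜ s) = 0 := by
  set w := r ⊗ₜ[K] s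
  have hσ : TensorProduct.comm K (L ⊗[K] L) (L ⊗[K] L) w = s ⊗ₜ r := rfl
  have h₁₁ : TensorProduct.map (TensorProduct.comm K L L).toLinearMap
      (TensorProduct.comm K L L).toLinearMap w = w := by
    simp [w, hr, hs, neg_tmul, tmul_neg]
  have h₁₀ : TensorProduct.map (TensorProduct.comm K L L).toLinearMap LinearMap.id w = -w := by
    simp [w, hr, neg_tmul]
  have h₀₁ : TensorProduct.map LinearMap.id (TensorProduct.comm K L L).toLinearMap w = -w := by
    simp [w, hs, tmul_neg]
  have e₃ : ybMap₁₃₂₃ K L w = cycMap K L (ybMap₁₂₁₃ K L w) := by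
    simpa [h₁₁] using LinearMap.congr_fun (ybMap₁₃₂₃_eq K L) w
  have e₁σ : ybMap₁₂₁₃ K L (s ⊗ₜ r) = cycMap K L (ybMap₁₂₂₃ K L w) := by
    simpa [h₁₀, hσ] using LinearMap.congr_fun (ybMap₁₂₁₃_comp_comm K L) w
  have e₂σ : ybMap₁₂₂₃ K L (s ⊗ₜ r) = cycMap K L (cycMap K L (ybMap₁₂₁₃ K L w)) := by
    simpa [h₀₁, hσ] using LinearMap.congr_fun (ybMap₁₂₂₃_comp_comm K L) w
  have e₃σ : ybMap₁₃₂₃ K L (s ⊗ₜ r) = cycMap K L (cycMap K L (ybMap₁₂₂₃ K L w)) := by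
    simpa [h₀₁, hσ] using LinearMap.congr_fun (ybMap₁₃₂₃_comp_comm K L) w
  simp only [assoc_map_deltaR, ybMap_eq_add, altMap, LinearMap.add_apply, LinearMap.comp_apply,
    LinearMap.id_apply, map_add, map_neg, e₃, e₁σ, e₂σ, e₃σ]
  abel

end

/-- For an antisymmetric `r ∈ g ⊗ g`, `Alt((δ_r ⊗ id)(δ_r(x))) + ⁅x, ⟦r,r⟧⁆ = 0` in
`g⊗g⊗g` for every `x ∈ g`. -/
theorem alt_delta_sq_add_lie_yb_eq_zero
    {K : Type*} [Field K] {L : Type*} [LieRing L] [LieAlgebra K L]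
    (r : L ⊗[K] L) (hr : TensorProduct.comm K L L r = -r) (x : L) :
    altMap K L ((TensorProduct.assoc K L L L)
        ((TensorProduct.map (deltaR r) (LinearMap.id : L →ₗ[K] L)) (deltaR r x)))
      + ⁅x, ybMap K L (r ⊗ₜ[K] r)⁆ = 0 := by
  rw [lie_ybMap, TensorProduct.LieModule.lie_tmul_right, map_add, ← add_assoc]
  exact altMap_assoc_map_deltaR_add_ybMap_add_ybMap hr (comm_deltaR_of_comm_eq_neg hr x)
end

section
/- Let M be a finite-dimensional smooth real manifold without boundary, X a smooth vector field on M, and γ : ℝ → M an integral curve of X (γ′(t) = X(γ(t)) for all t ∈ ℝ). Let f₁, …, f_s : M → ℝ and h^i_j : M → ℝ (1 ≤ i, j ≤ s) be smooth functions such that for each j and every x ∈ M, the derivative of f_j along X satisfies (X f_j)(x) = Σ_{i=1}^s h^i_j(x) f_i(x), where (X f)(x) denotes the differential of f at x applied to X(x). If f_i(γ(0)) = 0 for all i, then f_i(γ(t)) = 0 for all t ∈ ℝ and all i. -/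
/-! Along `γ` the vector `F t = (f i (γ t))ᵢ` solves the linear ODE `F' = A t F` with the
continuous coefficient matrix `A t = (h i j (γ t))`. The zero function solves the same ODE
with the same value at `0`, so `F = 0` by uniqueness of solutions of Lipschitz ODEs. -/

open Set

theorem ODE_solution_unique_of_linear {F : Type*} [NormedAddCommGroup F] [NormedSpace ℝ F]
    {A : ℝ → F →L[ℝ] F} (hA : Continuous A) {y z : ℝ → F}
    (hy : ∀ t, HasDerivAt y (A t (y t)) t) (hz : ∀ t, HasDerivAt z (A t (z t)) t)
    {t₀ : ℝ} (h : y t₀ = z t₀) : y = z := by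
  funext t
  obtain ⟨a, b, ht, ht₀⟩ : ∃ a b, t ∈ Ioo a b ∧ t₀ ∈ Ioo a b :=
    ⟨min t t₀ - 1, max t t₀ + 1, by grind, by grind⟩
  obtain ⟨C, hC⟩ :=
    (isCompact_Icc (a := a) (b := b)).exists_bound_of_continuousOn hA.continuousOn
  have hlip : ∀ τ ∈ Ioo a b, LipschitzOnWith C.toNNReal (A τ) univ := fun τ hτ =>
    ((A τ).lipschitz.weaken
      (NNReal.le_toNNReal_of_coe_le (hC τ (Ioo_subset_Icc_self hτ)))).lipschitzOnWith
  exact ODE_solution_unique_of_mem_Ioo hlip ht₀ (fun τ _ => ⟨hy τ, mem_univ _⟩)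
    (fun τ _ => ⟨hz τ, mem_univ _⟩) h ht

theorem Continuous.mulVecLin_toContinuousLinearMap {n : Type*} [Fintype n] [DecidableEq n]
    {A : ℝ → Matrix n n ℝ} (hA : Continuous A) :
    Continuous fun t => LinearMap.toContinuousLinearMap (A t).mulVecLin :=
  let toCLM : Matrix n n ℝ ≃ₗ[ℝ] (n → ℝ) →L[ℝ] n → ℝ :=
    Matrix.toLin'.trans LinearMap.toContinuousLinearMap
  (LinearMap.continuous_of_finiteDimensional toCLM.toLinearMap).comp hA

theorem MDifferentiableAt.hasDerivAt_comp
    {E : Type*} [NormedAddCommGroup E] [NormedSpace ℝ E]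
    {H : Type*} [TopologicalSpace H] {I : ModelWithCorners ℝ E H}
    {M : Type*} [TopologicalSpace M] [ChartedSpace H M]
    {F : Type*} [NormedAddCommGroup F] [NormedSpace ℝ F]
    {f : M → F} {γ : ℝ → M} {t : ℝ} {v : TangentSpace I (γ t)}
    (hf : MDifferentiableAt I (modelWithCornersSelf ℝ F) f (γ t))
    (hγ : HasMFDerivAt (modelWithCornersSelf ℝ ℝ) I γ t
      ((1 : ℝ →L[ℝ] ℝ).smulRight v)) :
    HasDerivAt (f ∘ γ) (mfderiv I (modelWithCornersSelf ℝ F) f (γ t) v) t := by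
  -- `f'` is typed by hand so that its codomain is `F`, not `TangentSpace 𝓘(ℝ, F) (f (γ t))`.
  have h := HasFDerivAt.hasDerivAt
    (f' := ((mfderiv I (modelWithCornersSelf ℝ F) f (γ t)).comp
      ((1 : ℝ →L[ℝ] ℝ).smulRight v) : ℝ →L[ℝ] F))
    (hf.hasMFDerivAt.comp t hγ).hasFDerivAt
  rwa [ContinuousLinearMap.comp_apply, ContinuousLinearMap.smulRight_apply,
    one_apply_eq_self, one_smul] at h

theorem darboux_family_locus_invariant_general
    {E : Type*} [NormedAddCommGroup E] [NormedSpace ℝ E]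
    {H : Type*} [TopologicalSpace H] {I : ModelWithCorners ℝ E H}
    {M : Type*} [TopologicalSpace M] [ChartedSpace H M]
    (X : (x : M) → TangentSpace I x)
    (γ : ℝ → M)
    (hγ : ∀ t : ℝ, HasMFDerivAt (modelWithCornersSelf ℝ ℝ) I γ t
      ((1 : ℝ →L[ℝ] ℝ).smulRight (X (γ t))))
    {s : ℕ} (f : Fin s → M → ℝ)
    (hf : ∀ j, ContMDiff I (modelWithCornersSelf ℝ ℝ) (⊤ : ℕ∞) (f j))
    (h : Fin s → Fin s → M → ℝ)
    (hh : ∀ i j, ContMDiff I (modelWithCornersSelf ℝ ℝ) (⊤ : ℕ∞) (h i j))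
    (hder : ∀ (j : Fin s) (x : M),
      mfderiv I (modelWithCornersSelf ℝ ℝ) (f j) x (X x) = ∑ i, h i j x * f i x)
    (h0 : ∀ i, f i (γ 0) = 0) :
    ∀ (t : ℝ) (i : Fin s), f i (γ t) = 0 := by
  have hγc : Continuous γ := continuous_iff_continuousAt.2 fun t => (hγ t).continuousAt
  set A : ℝ → Matrix (Fin s) (Fin s) ℝ := fun t => Matrix.of fun j i => h i j (γ t)
  have hA : Continuous A :=
    continuous_pi fun j => continuous_pi fun i => (hh i j).continuous.comp hγc
  have hF (t : ℝ) : HasDerivAt (fun t j => f j (γ t))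
      (LinearMap.toContinuousLinearMap (A t).mulVecLin fun j => f j (γ t)) t := by
    refine hasDerivAt_pi.2 fun j => ?_
    have hfj := ((hf j).mdifferentiableAt (by simp)).hasDerivAt_comp (hγ t)
    rw [hder] at hfj
    simpa [A, Matrix.mulVec, dotProduct, mul_comm, Function.comp_def] using hfj
  have hzero (t : ℝ) :
      HasDerivAt (fun _ => 0) (LinearMap.toContinuousLinearMap (A t).mulVecLin 0) t := by
    simpa using hasDerivAt_const t (0 : Fin s → ℝ)
  have hF0 := ODE_solution_unique_of_linear hA.mulVecLin_toContinuousLinearMap hF hzero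
    (funext h0)
  exact fun t i => congrFun (congrFun hF0 t) i

/-- Integral curves of a smooth vector field starting in the common zero locus of a
Darboux family of smooth functions (functions whose derivatives along the vector
field are linear combinations of themselves with smooth cofactors) remain in that
locus for all time. -/
theorem darboux_family_locus_invariant
    {E : Type*} [NormedAddCommGroup E] [NormedSpace ℝ E] [FiniteDimensional ℝ E]
    {H : Type*} [TopologicalSpace H] {I : ModelWithCorners ℝ E H} [I.Boundaryless]
    {M : Type*} [TopologicalSpace M] [ChartedSpace H M] [IsManifold I (⊤ : ℕ∞) M]
    (X : (x : M) → TangentSpace I x)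
    (hX : ContMDiff I I.tangent (⊤ : ℕ∞) (fun x => (⟨x, X x⟩ : TangentBundle I M)))
    (γ : ℝ → M)
    (hγ : ∀ t : ℝ, HasMFDerivAt (modelWithCornersSelf ℝ ℝ) I γ t
      ((1 : ℝ →L[ℝ] ℝ).smulRight (X (γ t))))
    {s : ℕ} (f : Fin s → M → ℝ)
    (hf : ∀ j, ContMDiff I (modelWithCornersSelf ℝ ℝ) (⊤ : ℕ∞) (f j))
    (h : Fin s → Fin s → M → ℝ)
    (hh : ∀ i j, ContMDiff I (modelWithCornersSelf ℝ ℝ) (⊤ : ℕ∞) (h i j))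
    (hder : ∀ (j : Fin s) (x : M),
      mfderiv I (modelWithCornersSelf ℝ ℝ) (f j) x (X x) = ∑ i, h i j x * f i x)
    (h0 : ∀ i, f i (γ 0) = 0) :
    ∀ (t : ℝ) (i : Fin s), f i (γ t) = 0 :=
  darboux_family_locus_invariant_general X γ hγ f hf h hh hder h0
end

section
/- Let g be a three-dimensional real Lie algebra whose Killing form κ is nonzero, and suppose its derived ideal g^{(1)} := ⁅g, g⁆ is a two-dimensional abelian Lie subalgebra contained in the radical of κ (κ(w, z) = 0 for all w ∈ g^{(1)} and z ∈ g). Then for every Lie algebra automorphism T of g and every v ∉ g^{(1)}, either T(v) − v ∈ g^{(1)} or T(v) + v ∈ g^{(1)}. -/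
/-- Let `g` be a three-dimensional real Lie algebra with nonzero Killing form whose
derived ideal `⁅g, g⁆` is a two-dimensional abelian subalgebra contained in the
radical of the Killing form. Then every Lie algebra automorphism `T` of `g` and
every `v ∉ ⁅g, g⁆` satisfy `T(v) − v ∈ ⁅g, g⁆` or `T(v) + v ∈ ⁅g, g⁆`. -/
theorem automorphism_fixes_transversal_up_to_sign
    {L : Type*} [LieRing L] [LieAlgebra ℝ L] [FiniteDimensional ℝ L]
    (hdim : Module.finrank ℝ L = 3)
    (hκ : killingForm ℝ L ≠ 0)
    (hd2 : Module.finrank ℝ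
      ↥(⁅(⊤ : LieIdeal ℝ L), (⊤ : LieIdeal ℝ L)⁆ : LieIdeal ℝ L) = 2)
    (habel : ∀ a b : L, a ∈ (⁅(⊤ : LieIdeal ℝ L), (⊤ : LieIdeal ℝ L)⁆ : LieIdeal ℝ L) →
      b ∈ (⁅(⊤ : LieIdeal ℝ L), (⊤ : LieIdeal ℝ L)⁆ : LieIdeal ℝ L) → ⁅a, b⁆ = 0)
    (hrad : ∀ w ∈ (⁅(⊤ : LieIdeal ℝ L), (⊤ : LieIdeal ℝ L)⁆ : LieIdeal ℝ L),
      ∀ z : L, killingForm ℝ L w z = 0)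
    (T : L ≃ₗ⁅ℝ⁆ L) (v : L)
    (hv : v ∉ (⁅(⊤ : LieIdeal ℝ L), (⊤ : LieIdeal ℝ L)⁆ : LieIdeal ℝ L)) :
    T v - v ∈ (⁅(⊤ : LieIdeal ℝ L), (⊤ : LieIdeal ℝ L)⁆ : LieIdeal ℝ L) ∨
      T v + v ∈ (⁅(⊤ : LieIdeal ℝ L), (⊤ : LieIdeal ℝ L)⁆ : LieIdeal ℝ L) := by
  set D := (⁅(⊤ : LieIdeal ℝ L), (⊤ : LieIdeal ℝ L)⁆ : LieIdeal ℝ L) with hDdef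
  -- the radical condition also on the right, by symmetry
  have hrad' : ∀ w ∈ D, ∀ z : L, killingForm ℝ L z w = 0 := fun w hw z => by
    rw [LieModule.traceForm_comm]; exact hrad w hw z
  -- T maps D into D
  have hTD : ∀ x ∈ D, T x ∈ D := by
    have h1 : LieAlgebra.derivedSeries ℝ L 1 = D := rfl
    have h2 := LieIdeal.derivedSeries_map_eq (f := (T : L →ₗ⁅ℝ⁆ L)) 1 T.surjective
    rw [h1] at h2
    intro x hx
    rw [← h2]
    exact LieIdeal.mem_map hx
  -- D ⊔ span v = ⊤
  have hsup : (D : Submodule ℝ L) ⊔ Submodule.span ℝ {v} = ⊤ := by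
    apply Submodule.eq_top_of_finrank_eq
    rw [hdim]
    have hlt : (D : Submodule ℝ L) < (D : Submodule ℝ L) ⊔ Submodule.span ℝ {v} := by
      refine lt_of_le_of_ne le_sup_left (fun h => hv ?_)
      have : v ∈ (D : Submodule ℝ L) ⊔ Submodule.span ℝ {v} :=
        Submodule.mem_sup_right (Submodule.mem_span_singleton_self v)
      rwa [← h] at this
    have h3 : Module.finrank ℝ ↥((D : Submodule ℝ L) ⊔ Submodule.span ℝ {v}) ≤ 3 :=
      hdim ▸ Submodule.finrank_le _
    have h2 : 2 < Module.finrank ℝ ↥((D : Submodule ℝ L) ⊔ Submodule.span ℝ {v}) :=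
      hd2 ▸ Submodule.finrank_lt_finrank_of_lt hlt
    omega
  -- decompose any element
  have hdec : ∀ x : L, ∃ w ∈ D, ∃ c : ℝ, x = w + c • v := by
    intro x
    have hx : x ∈ (D : Submodule ℝ L) ⊔ Submodule.span ℝ {v} := hsup ▸ Submodule.mem_top
    obtain ⟨w, hw, z, hz, hwz⟩ := Submodule.mem_sup.mp hx
    obtain ⟨c, rfl⟩ := Submodule.mem_span_singleton.mp hz
    exact ⟨w, hw, c, hwz.symm⟩
  -- κ(v,v) ≠ 0
  have hκvv : killingForm ℝ L v v ≠ 0 := by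
    intro h0
    apply hκ
    ext x y
    obtain ⟨w, hw, a, rfl⟩ := hdec x
    obtain ⟨w', hw', b, rfl⟩ := hdec y
    simp only [map_add, map_smul, LinearMap.add_apply, LinearMap.smul_apply, smul_eq_mul]
    rw [hrad w hw, hrad w hw, hrad' w' hw', h0]
    simp
  -- decompose T v
  obtain ⟨w, hw, c, hTv⟩ := hdec (T v)
  -- κ invariance
  have hinv : killingForm ℝ L (T v) (T v) = killingForm ℝ L v v :=
    LieAlgebra.killingForm_of_equiv_apply T v v
  have hc2 : c * c = 1 := by
    rw [hTv] at hinv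
    simp only [map_add, map_smul, LinearMap.add_apply, LinearMap.smul_apply, smul_eq_mul] at hinv
    rw [hrad w hw, hrad w hw, hrad' w hw] at hinv
    have : c * c * killingForm ℝ L v v = killingForm ℝ L v v := by linarith
    have h1 : (c * c - 1) * killingForm ℝ L v v = 0 := by ring_nf; linarith
    rcases mul_eq_zero.mp h1 with h | h
    · linarith
    · exact absurd h hκvv
  rcases mul_self_eq_one_iff.mp hc2 with rfl | rfl
  · left
    rw [hTv, one_smul, add_sub_cancel_right]
    exact hw
  · right
    rw [hTv]
    have : w + (-1 : ℝ) • v + v = w := by module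
    rw [this]
    exact hw
end

section
/- Let g be a three-dimensional real Lie algebra whose Killing form κ is nonzero, and suppose its derived ideal g^{(1)} := ⁅g, g⁆ is a two-dimensional abelian Lie subalgebra contained in the radical of κ (κ(w, z) = 0 for all w ∈ g^{(1)} and z ∈ g). Fix v ∉ g^{(1)}. Then every Lie algebra automorphism T of g leaves invariant the set of eigenvectors of the restriction of ad_v to g^{(1)}: if e ∈ g^{(1)} and ⁅v, e⁆ = μ e for some μ ∈ ℝ, then T(e) ∈ g^{(1)} and there exists μ′ ∈ ℝ with ⁅v, T(e)⁆ = μ′ T(e). -/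
/-- Let `g` be a three-dimensional real Lie algebra with nonzero Killing form whose
derived ideal `⁅g, g⁆` is a two-dimensional abelian subalgebra contained in the
radical of the Killing form, and fix `v ∉ ⁅g, g⁆`. Then every Lie algebra
automorphism `T` leaves invariant the set of eigenvectors of `ad_v` restricted to
the derived ideal: if `e ∈ ⁅g, g⁆` and `⁅v, e⁆ = μ e`, then `T(e) ∈ ⁅g, g⁆` and
`⁅v, T(e)⁆ = μ' T(e)` for some `μ' ∈ ℝ`. -/
theorem automorphism_preserves_ad_eigenvectors
    {L : Type*} [LieRing L] [LieAlgebra ℝ L] [FiniteDimensional ℝ L]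
    (hdim : Module.finrank ℝ L = 3)
    (hκ : killingForm ℝ L ≠ 0)
    (hd2 : Module.finrank ℝ
      ↥(⁅(⊤ : LieIdeal ℝ L), (⊤ : LieIdeal ℝ L)⁆ : LieIdeal ℝ L) = 2)
    (habel : ∀ a b : L, a ∈ (⁅(⊤ : LieIdeal ℝ L), (⊤ : LieIdeal ℝ L)⁆ : LieIdeal ℝ L) →
      b ∈ (⁅(⊤ : LieIdeal ℝ L), (⊤ : LieIdeal ℝ L)⁆ : LieIdeal ℝ L) → ⁅a, b⁆ = 0)
    (hrad : ∀ w ∈ (⁅(⊤ : LieIdeal ℝ L), (⊤ : LieIdeal ℝ L)⁆ : LieIdeal ℝ L),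
      ∀ z : L, killingForm ℝ L w z = 0)
    (v : L)
    (hv : v ∉ (⁅(⊤ : LieIdeal ℝ L), (⊤ : LieIdeal ℝ L)⁆ : LieIdeal ℝ L))
    (T : L ≃ₗ⁅ℝ⁆ L) (e : L)
    (he : e ∈ (⁅(⊤ : LieIdeal ℝ L), (⊤ : LieIdeal ℝ L)⁆ : LieIdeal ℝ L))
    (μ : ℝ) (heig : ⁅v, e⁆ = μ • e) :
    T e ∈ (⁅(⊤ : LieIdeal ℝ L), (⊤ : LieIdeal ℝ L)⁆ : LieIdeal ℝ L) ∧
      ∃ μ' : ℝ, ⁅v, T e⁆ = μ' • T e := by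
  set D : LieIdeal ℝ L := ⁅(⊤ : LieIdeal ℝ L), (⊤ : LieIdeal ℝ L)⁆ with hD
  have hsurj : Function.Surjective T.toLieHom := T.surjective
  have hmaptop : LieIdeal.map T.toLieHom ⊤ = ⊤ := by
    rw [eq_top_iff]
    intro x _
    have := LieIdeal.mem_map (f := T.toLieHom) (I := (⊤ : LieIdeal ℝ L))
      (x := T.symm x) trivial
    have h2 : T.toLieHom (T.symm x) = x := T.apply_symm_apply x
    rwa [h2] at this
  have hmapD : LieIdeal.map T.toLieHom D = D := by
    rw [hD, LieIdeal.map_bracket_eq _ hsurj, hmaptop]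
  have hTe : T e ∈ D := by
    rw [← hmapD]
    exact LieIdeal.mem_map he
  refine ⟨hTe, ?_⟩
  -- decompose T.symm v
  set D' : Submodule ℝ L := (D : Submodule ℝ L) with hD'
  have hsup : Submodule.span ℝ {v} ⊔ D' = ⊤ := by
    have hlt : D' < Submodule.span ℝ {v} ⊔ D' := by
      refine lt_of_le_of_ne le_sup_right ?_
      intro hEq
      apply hv
      have : v ∈ Submodule.span ℝ {v} ⊔ D' := Submodule.mem_sup_left (Submodule.mem_span_singleton_self v)
      rw [← hEq] at this
      exact this
    have h3 : 2 < Module.finrank ℝ ↥(Submodule.span ℝ {v} ⊔ D') := by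
      have := Submodule.finrank_lt_finrank_of_lt hlt
      have hD2 : Module.finrank ℝ ↥D' = 2 := hd2
      omega
    have hle : Module.finrank ℝ ↥(Submodule.span ℝ {v} ⊔ D') ≤ 3 := by
      rw [← hdim]; exact Submodule.finrank_le _
    apply Submodule.eq_top_of_finrank_eq
    rw [hdim]; omega
  have hmem : T.symm v ∈ Submodule.span ℝ {v} ⊔ D' := by rw [hsup]; trivial
  obtain ⟨y, hy, w, hw, hsum⟩ := Submodule.mem_sup.mp hmem
  obtain ⟨c, rfl⟩ := Submodule.mem_span_singleton.mp hy
  have hwD : w ∈ D := hw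
  have hkey : ⁅T.symm v, e⁆ = (c * μ) • e := by
    rw [← hsum, add_lie, smul_lie, heig, habel w e hwD he, add_zero, smul_smul]
  have : ⁅v, T e⁆ = (c * μ) • T e := by
    have := congrArg T hkey
    rw [LieEquiv.map_lie, LieEquiv.apply_symm_apply] at this
    rw [this]; exact T.toLinearEquiv.map_smul _ _
  exact ⟨c * μ, this⟩
end
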